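/- The sequence {x^k} generated by the AdaPBB iteration is bounded: for all k ≥ 0, ‖x^k − x*‖ ≤ T. -/

import Mathlib

open scoped RealInnerProductSpace
open Finset Filter

noncomputable section

/-- The AdaPBB iteration (Algorithm 3 of the paper) in its implicit form, for a composite
objective `F = f + g` where `f : ℝⁿ → ℝ` is convex and differentiable with gradient `f'`,
and `g : ℝⁿ → ℝ` is convex.  `ξ k` is a subgradient of `g` at `x k`. -/
structure AdaPBB (n : ℕ) where
  f : EuclideanSpace ℝ (Fin n) → ℝ
  g : EuclideanSpace ℝ (Fin n) → ℝ
  f' : EuclideanSpace ℝ (Fin n) → EuclideanSpace ℝ (Fin n)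
  x : ℕ → EuclideanSpace ℝ (Fin n)
  ξ : ℕ → EuclideanSpace ℝ (Fin n)
  α : ℕ → ℝ
  θ : ℕ → ℝ
  lam : ℕ → ℝ
  hfconv : ConvexOn ℝ Set.univ f
  hgconv : ConvexOn ℝ Set.univ g
  hgrad : ∀ y, HasGradientAt f (f' y) y
  hmin : ∃ z, ∀ y, f z + g z ≤ f y + g y
  hα0 : 0 < α 0
  hθ0 : 0 ≤ θ 0
  hsub : ∀ k, ∀ y, g (x k) + ⟪ξ k, y - x k⟫ ≤ g y
  hstep : ∀ k, x (k + 1) = x k - α k • (f' (x k) + ξ (k + 1))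
  hne : ∀ k, f' (x (k + 1)) ≠ f' (x k)
  hlam : ∀ k, lam (k + 1) =
    ⟪f' (x (k + 1)) - f' (x k), x (k + 1) - x k⟫ / ‖f' (x (k + 1)) - f' (x k)‖ ^ 2
  hlampos : ∀ k, 0 < lam (k + 1)
  hcase1 : ∀ k, α k ≤ lam (k + 1) →
    α (k + 1) = Real.sqrt (1 + θ k) * α k ∧ θ (k + 1) = α (k + 1) / α k
  hcase2 : ∀ k, α k / 2 < lam (k + 1) → lam (k + 1) < α k →
    α (k + 1) = α k / Real.sqrt 2 ∧ θ (k + 1) = 0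
  hcase3 : ∀ k, lam (k + 1) ≤ α k / 2 →
    α (k + 1) = lam (k + 1) / Real.sqrt 2 ∧ θ (k + 1) = 0

namespace AdaPBB

variable {n : ℕ}

/-- The composite objective `F = f + g`. -/
def F (S : AdaPBB n) (y : EuclideanSpace ℝ (Fin n)) : ℝ := S.f y + S.g y

/-- `B_k` (for `k ≥ 1`), as in (5.13). -/
def B (S : AdaPBB n) (k : ℕ) : ℝ :=
  if S.α (k - 1) ≤ S.lam k then 0
  else if S.α (k - 1) / 2 < S.lam k then 1
  else (S.α (k - 1) - S.lam k) ^ 2 / S.lam k ^ 2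

/-- `E_k` for `k ≥ 1`, as in (5.13). -/
def Eaux (S : AdaPBB n) (k : ℕ) : ℝ :=
  if S.α (k - 1) ≤ S.lam k then 1 / S.α (k - 1) else 0

/-- `E_k`, with the convention `E_0 = (E_1·α_1² - α_0)/α_0²`. -/
def E (S : AdaPBB n) (k : ℕ) : ℝ :=
  if k = 0 then (S.Eaux 1 * S.α 1 ^ 2 - S.α 0) / S.α 0 ^ 2 else S.Eaux k

/-- The energy `V_k` (for `k ≥ 1`), relative to a minimizer `xs` of `F`. -/
def V (S : AdaPBB n) (xs : EuclideanSpace ℝ (Fin n)) (k : ℕ) : ℝ :=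
  ‖S.x k - xs‖ ^ 2 + 2 * S.B k * S.α k ^ 2 * ‖S.f' (S.x (k - 1)) + S.ξ (k - 1)‖ ^ 2 +
    2 * S.α (k - 1) * (1 + S.E (k - 1) * S.α (k - 1)) * (S.F (S.x (k - 1)) - S.F xs)

/-- The energy `U_k` (for `k ≥ 1`), relative to a minimizer `xs` of `F`. -/
def U (S : AdaPBB n) (xs : EuclideanSpace ℝ (Fin n)) (k : ℕ) : ℝ :=
  ‖S.x k - xs‖ ^ 2 + 2 * S.B k * S.α k ^ 2 * ‖S.f' (S.x (k - 1)) + S.ξ (k - 1)‖ ^ 2 +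
    2 * S.E k * S.α k ^ 2 * (S.F (S.x (k - 1)) - S.F xs)

end AdaPBB

end

/-!
Write `v_k = ∇f(x^k) + ξ^k`, a subgradient of `F` at `x^k`. One proximal gradient step gives
`‖x^{k+1} - x*‖² ≤ ‖x^k - x*‖² - 2α_k (F(x^k) - F_*) + α_k² ‖v_k‖²`, while the
Barzilai–Borwein quotient `λ_{k+1}` bounds `‖v_{k+1}‖` by `‖v_k‖` in cases (ii) and (iii) and by
the decrease `F(x^k) - F(x^{k+1})` in case (i). Together these give `V_{k+2} ≤ U_{k+1} ≤ V_{k+1}`,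
so `‖x^k - x*‖² ≤ U_k ≤ V_1` for `k ≥ 1`, and the choice of `E_0` makes `V_1 ≤ T²`.
-/

section ProximalStep

variable {E : Type*} [NormedAddCommGroup E] [InnerProductSpace ℝ E]

def HasSubgradientAt (g : E → ℝ) (ξ x : E) : Prop := ∀ y, g x + ⟪ξ, y - x⟫ ≤ g y

theorem ConvexOn.hasSubgradientAt_of_hasGradientAt [CompleteSpace E] {f : E → ℝ} {f' x : E}
    (hf : ConvexOn ℝ Set.univ f) (hx : HasGradientAt f f' x) : HasSubgradientAt f f' x := by
  intro y
  have hφ : ConvexOn ℝ Set.univ (f ∘ AffineMap.lineMap (k := ℝ) x y) := by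
    simpa using hf.comp_affineMap (AffineMap.lineMap x y : ℝ →ᵃ[ℝ] E)
  have hderiv : HasDerivAt (f ∘ AffineMap.lineMap (k := ℝ) x y) ⟪f', y - x⟫ 0 := by
    have hfx := hasGradientAt_iff_hasFDerivAt.mp hx
    rw [← AffineMap.lineMap_apply_zero (k := ℝ) x y] at hfx
    simpa using hfx.comp_hasDerivAt (0 : ℝ) AffineMap.hasDerivAt_lineMap
  have := hφ.le_slope_of_hasDerivAt (Set.mem_univ 0) (Set.mem_univ 1) zero_lt_one hderiv
  simp only [slope_def_field, Function.comp_apply, AffineMap.lineMap_apply_one,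
    AffineMap.lineMap_apply_zero, sub_zero, div_one] at this
  linarith

theorem HasSubgradientAt.add {f g : E → ℝ} {p ξ x : E} (hf : HasSubgradientAt f p x)
    (hg : HasSubgradientAt g ξ x) : HasSubgradientAt (fun y => f y + g y) (p + ξ) x := by
  intro y
  have := hf y
  have := hg y
  rw [inner_add_left]
  linarith

theorem HasSubgradientAt.inner_sub_nonneg {g : E → ℝ} {ξ η x y : E}
    (hx : HasSubgradientAt g ξ x) (hy : HasSubgradientAt g η y) : 0 ≤ ⟪η - ξ, y - x⟫ := by
  have hxy := hx y
  have hyx := hy x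
  rw [← neg_sub y x, inner_neg_right] at hyx
  rw [inner_sub_left]
  linarith

theorem norm_le_of_inner_sub_nonpos {v w : E} (h : ⟪w - v, w⟫ ≤ 0) : ‖w‖ ≤ ‖v‖ := by
  rw [inner_sub_left, real_inner_self_eq_norm_sq] at h
  nlinarith [real_inner_le_norm v w, norm_nonneg v, norm_nonneg w]

variable {f g : E → ℝ} {x x' p ξ ξ' : E} {α : ℝ}

theorem norm_add_le_of_proxStep (hξ : HasSubgradientAt g ξ x) (hξ' : HasSubgradientAt g ξ' x')
    (hstep : x' = x - α • (p + ξ')) (hα : 0 < α) : ‖p + ξ'‖ ≤ ‖p + ξ‖ := by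
  have hmono := hξ.inner_sub_nonneg hξ'
  rw [hstep, sub_sub_cancel_left, inner_neg_right, real_inner_smul_right,
    show ξ' - ξ = (p + ξ') - (p + ξ) by abel] at hmono
  exact norm_le_of_inner_sub_nonpos (nonpos_of_mul_nonpos_right (by linarith) hα)

theorem norm_sub_sq_le_of_proxStep (hp : HasSubgradientAt f p x) (hξ : HasSubgradientAt g ξ x)
    (hξ' : HasSubgradientAt g ξ' x') (hstep : x' = x - α • (p + ξ')) (hα : 0 ≤ α) (z : E) :
    ‖x' - z‖ ^ 2 ≤ ‖x - z‖ ^ 2 - 2 * α * ((f x + g x) - (f z + g z)) + α ^ 2 * ‖p + ξ‖ ^ 2 := by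
  set w := p + ξ'
  set v := p + ξ
  have hdescent : (f x + g x) - (f z + g z) + α * ⟪w - v, w⟫ ≤ ⟪w, x - z⟫ := by
    have h1 := hp z
    have h2 := hξ' z
    have h3 := hξ x'
    have hwv : w - v = ξ' - ξ := by simp only [w, v]; abel
    rw [hstep] at h2 h3
    rw [hwv]
    simp only [w, inner_add_left, inner_sub_left, inner_sub_right, inner_smul_right,
      inner_add_right, sub_sub_cancel_left, inner_neg_right] at h1 h2 h3 ⊢
    linarith
  have hexpand : ‖x' - z‖ ^ 2 = ‖x - z‖ ^ 2 - 2 * α * ⟪w, x - z⟫ + α ^ 2 * ‖w‖ ^ 2 := by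
    rw [hstep, show x - α • w - z = (x - z) - α • w by abel, norm_sub_sq_real, norm_smul,
      real_inner_smul_right, real_inner_comm, Real.norm_eq_abs, mul_pow, sq_abs]
    ring
  have hcross : 2 * ⟪v, w⟫ - ‖w‖ ^ 2 ≤ ‖v‖ ^ 2 := by
    nlinarith [norm_sub_sq_real v w, real_inner_comm v w, sq_nonneg ‖v - w‖]
  rw [inner_sub_left, real_inner_self_eq_norm_sq] at hdescent
  nlinarith [mul_le_mul_of_nonneg_left hdescent hα, mul_le_mul_of_nonneg_left hcross (sq_nonneg α)]

end ProximalStep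

section BarzilaiBorwein

-- The hypothesis `h` below is the Barzilai–Borwein relation `lam = ⟪d, x' - x⟫ / ‖d‖²`
-- for a step `x' - x = -α • w`.
variable {E : Type*} [NormedAddCommGroup E] [InnerProductSpace ℝ E] {w d : E} {α lam : ℝ}

theorem mul_norm_add_sq_eq (h : lam * ‖d‖ ^ 2 = -(α * ⟪d, w⟫)) :
    α * ‖w + d‖ ^ 2 = α * ‖w‖ ^ 2 + (α - 2 * lam) * ‖d‖ ^ 2 := by
  linear_combination α * norm_add_sq_real w d + 2 * h - 2 * α * real_inner_comm w d

theorem abs_mul_norm_le_mul_norm (h : lam * ‖d‖ ^ 2 = -(α * ⟪d, w⟫)) (hα : 0 ≤ α) :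
    |lam| * ‖d‖ ≤ α * ‖w‖ := by
  have hcs : |lam| * ‖d‖ ^ 2 ≤ α * ‖w‖ * ‖d‖ := by
    rw [← abs_of_nonneg (sq_nonneg ‖d‖), ← abs_mul, h, abs_neg, abs_mul, abs_of_nonneg hα]
    nlinarith [abs_real_inner_le_norm d w]
  rcases (norm_nonneg d).eq_or_lt with hd | hd
  · rw [← hd, mul_zero]
    positivity
  · nlinarith

theorem mul_norm_add_sq_le_mul_inner (h : lam * ‖d‖ ^ 2 = -(α * ⟪d, w⟫)) (hlam : α ≤ lam) :
    α * ‖w + d‖ ^ 2 ≤ α * ⟪w + d, w⟫ := by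
  rw [inner_add_left, real_inner_self_eq_norm_sq]
  nlinarith [mul_norm_add_sq_eq h, sq_nonneg ‖d‖]

theorem norm_add_le_of_le_two_mul (h : lam * ‖d‖ ^ 2 = -(α * ⟪d, w⟫)) (hα : 0 < α)
    (hlam : α ≤ 2 * lam) : ‖w + d‖ ≤ ‖w‖ := by
  have : α * ‖w + d‖ ^ 2 ≤ α * ‖w‖ ^ 2 := by nlinarith [mul_norm_add_sq_eq h, sq_nonneg ‖d‖]
  exact (pow_le_pow_iff_left₀ (norm_nonneg _) (norm_nonneg _) two_ne_zero).mp
    (le_of_mul_le_mul_left this hα)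

theorem sq_mul_norm_add_sq_le_of_two_mul_le (h : lam * ‖d‖ ^ 2 = -(α * ⟪d, w⟫)) (hα : 0 < α)
    (hlam : 2 * lam ≤ α) : lam ^ 2 * ‖w + d‖ ^ 2 ≤ (α - lam) ^ 2 * ‖w‖ ^ 2 := by
  have hd : lam ^ 2 * ‖d‖ ^ 2 ≤ α ^ 2 * ‖w‖ ^ 2 := by
    have := pow_le_pow_left₀ (by positivity) (abs_mul_norm_le_mul_norm h hα.le) 2
    rwa [mul_pow, mul_pow, sq_abs] at this
  refine le_of_mul_le_mul_left ?_ hα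
  nlinarith [mul_norm_add_sq_eq h, mul_le_mul_of_nonneg_left hd (by linarith : 0 ≤ α - 2 * lam)]

end BarzilaiBorwein

namespace AdaPBB

variable {n : ℕ} (S : AdaPBB n)

def dir (k : ℕ) : EuclideanSpace ℝ (Fin n) := S.f' (S.x k) + S.ξ (k + 1)

def subgradF (k : ℕ) : EuclideanSpace ℝ (Fin n) := S.f' (S.x k) + S.ξ k

def gradDiff (k : ℕ) : EuclideanSpace ℝ (Fin n) := S.f' (S.x (k + 1)) - S.f' (S.x k)

theorem alpha_pos_and_theta_nonneg (k : ℕ) : 0 < S.α k ∧ 0 ≤ S.θ k := by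
  induction k with
  | zero => exact ⟨S.hα0, S.hθ0⟩
  | succ k ih =>
    have hsqrt2 : 0 < Real.sqrt 2 := by positivity
    rcases le_or_gt (S.α k) (S.lam (k + 1)) with h1 | h1
    · obtain ⟨hα, hθ⟩ := S.hcase1 k h1
      have hα_pos : 0 < S.α (k + 1) := by
        rw [hα]
        exact mul_pos (Real.sqrt_pos.mpr (by linarith [ih.2])) ih.1
      exact ⟨hα_pos, hθ ▸ (div_pos hα_pos ih.1).le⟩
    rcases le_or_gt (S.lam (k + 1)) (S.α k / 2) with h3 | h3
    · obtain ⟨hα, hθ⟩ := S.hcase3 k h3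
      exact ⟨hα ▸ div_pos (S.hlampos k) hsqrt2, hθ.ge⟩
    · obtain ⟨hα, hθ⟩ := S.hcase2 k h3 h1
      exact ⟨hα ▸ div_pos ih.1 hsqrt2, hθ.ge⟩

theorem alpha_pos (k : ℕ) : 0 < S.α k := (S.alpha_pos_and_theta_nonneg k).1

theorem hasSubgradientAt_F (k : ℕ) : HasSubgradientAt S.F (S.subgradF k) (S.x k) :=
  (S.hfconv.hasSubgradientAt_of_hasGradientAt (S.hgrad _)).add (S.hsub k)

theorem x_sub_x_succ (k : ℕ) : S.x k - S.x (k + 1) = S.α k • S.dir k := by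
  rw [S.hstep k, sub_sub_cancel]
  rfl

theorem subgradF_succ (k : ℕ) : S.subgradF (k + 1) = S.dir k + S.gradDiff k := by
  simp only [subgradF, dir, gradDiff]
  abel

theorem lam_mul_norm_gradDiff_sq (k : ℕ) :
    S.lam (k + 1) * ‖S.gradDiff k‖ ^ 2 = -(S.α k * ⟪S.gradDiff k, S.dir k⟫) := by
  have hd : ‖S.gradDiff k‖ ^ 2 ≠ 0 := by
    simpa [gradDiff, sub_eq_zero] using S.hne k
  rw [S.hlam k, ← neg_sub (S.x k), x_sub_x_succ, inner_neg_right, real_inner_smul_right]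
  exact div_mul_cancel₀ _ hd

theorem norm_dir_le (k : ℕ) : ‖S.dir k‖ ≤ ‖S.subgradF k‖ :=
  norm_add_le_of_proxStep (S.hsub k) (S.hsub (k + 1)) (S.hstep k) (S.alpha_pos k)

theorem norm_sub_sq_succ_le (xs : EuclideanSpace ℝ (Fin n)) (k : ℕ) :
    ‖S.x (k + 1) - xs‖ ^ 2 ≤ ‖S.x k - xs‖ ^ 2 - 2 * S.α k * (S.F (S.x k) - S.F xs)
      + S.α k ^ 2 * ‖S.subgradF k‖ ^ 2 :=
  norm_sub_sq_le_of_proxStep (S.hfconv.hasSubgradientAt_of_hasGradientAt (S.hgrad _))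
    (S.hsub k) (S.hsub (k + 1)) (S.hstep k) (S.alpha_pos k).le xs

theorem alpha_mul_norm_subgradF_succ_sq_le (k : ℕ) (h : S.α k ≤ S.lam (k + 1)) :
    S.α k * ‖S.subgradF (k + 1)‖ ^ 2 ≤ S.F (S.x k) - S.F (S.x (k + 1)) := by
  have hF := S.hasSubgradientAt_F (k + 1) (S.x k)
  rw [x_sub_x_succ, real_inner_smul_right] at hF
  have := mul_norm_add_sq_le_mul_inner (S.lam_mul_norm_gradDiff_sq k) h
  rw [← subgradF_succ] at this
  linarith

theorem norm_subgradF_succ_le (k : ℕ) (h : S.α k ≤ 2 * S.lam (k + 1)) :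
    ‖S.subgradF (k + 1)‖ ≤ ‖S.subgradF k‖ := by
  rw [subgradF_succ]
  exact (norm_add_le_of_le_two_mul (S.lam_mul_norm_gradDiff_sq k) (S.alpha_pos k) h).trans
    (S.norm_dir_le k)

theorem lam_sq_mul_norm_subgradF_succ_sq_le (k : ℕ) (h : 2 * S.lam (k + 1) ≤ S.α k) :
    S.lam (k + 1) ^ 2 * ‖S.subgradF (k + 1)‖ ^ 2
      ≤ (S.α k - S.lam (k + 1)) ^ 2 * ‖S.subgradF k‖ ^ 2 := by
  rw [subgradF_succ]
  refine (sq_mul_norm_add_sq_le_of_two_mul_le (S.lam_mul_norm_gradDiff_sq k) (S.alpha_pos k)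
    h).trans (mul_le_mul_of_nonneg_left ?_ (sq_nonneg _))
  exact pow_le_pow_left₀ (norm_nonneg _) (S.norm_dir_le k) 2

theorem B_succ (k : ℕ) : S.B (k + 1) =
    if S.α k ≤ S.lam (k + 1) then 0
    else if S.α k / 2 < S.lam (k + 1) then 1
    else (S.α k - S.lam (k + 1)) ^ 2 / S.lam (k + 1) ^ 2 := rfl

theorem E_succ (k : ℕ) : S.E (k + 1) = if S.α k ≤ S.lam (k + 1) then 1 / S.α k else 0 := rfl

theorem E_zero_mul_sq : S.E 0 * S.α 0 ^ 2 = S.E 1 * S.α 1 ^ 2 - S.α 0 :=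
  div_mul_cancel₀ _ (pow_ne_zero 2 (S.alpha_pos 0).ne')

theorem B_succ_nonneg (k : ℕ) : 0 ≤ S.B (k + 1) := by
  rw [B_succ]
  split_ifs <;> positivity

theorem E_succ_nonneg (k : ℕ) : 0 ≤ S.E (k + 1) := by
  have := S.alpha_pos k
  rw [E_succ]
  split_ifs <;> positivity

theorem theta_succ_eq (k : ℕ) : S.θ (k + 1) = S.E (k + 1) * S.α (k + 1) := by
  rw [E_succ]
  split_ifs with h1
  · rw [(S.hcase1 k h1).2, one_div_mul_eq_div]
  rcases le_or_gt (S.lam (k + 1)) (S.α k / 2) with h3 | h3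
  · rw [(S.hcase3 k h3).2, zero_mul]
  · rw [(S.hcase2 k h3 (not_le.mp h1)).2, zero_mul]

theorem two_mul_B_succ_mul_sq_le (k : ℕ) : 2 * S.B (k + 1) * S.α (k + 1) ^ 2 ≤ S.α k ^ 2 := by
  have hα := S.alpha_pos k
  have hlam := S.hlampos k
  rw [B_succ]
  split_ifs with h1 h2
  · nlinarith
  · rw [(S.hcase2 k h2 (not_le.mp h1)).1, div_pow, Real.sq_sqrt zero_le_two]
    linarith
  · rw [(S.hcase3 k (not_lt.mp h2)).1, div_pow, Real.sq_sqrt zero_le_two]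
    field_simp
    nlinarith

theorem E_succ_mul_sq_le (k : ℕ) :
    S.E (k + 1) * S.α (k + 1) ^ 2 ≤ S.α k * (1 + S.E k * S.α k) := by
  cases k with
  | zero => linarith [S.E_zero_mul_sq]
  | succ k =>
    have hα := S.alpha_pos (k + 1)
    have hθ := (S.alpha_pos_and_theta_nonneg (k + 1)).2
    rw [← theta_succ_eq, E_succ]
    split_ifs with h1
    · rw [(S.hcase1 (k + 1) h1).1, mul_pow, Real.sq_sqrt (by linarith)]
      field_simp
      rfl
    · rw [zero_mul]
      positivity

theorem V_succ (xs : EuclideanSpace ℝ (Fin n)) (k : ℕ) : S.V xs (k + 1) =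
    ‖S.x (k + 1) - xs‖ ^ 2 + 2 * S.B (k + 1) * S.α (k + 1) ^ 2 * ‖S.subgradF k‖ ^ 2 +
      2 * S.α k * (1 + S.E k * S.α k) * (S.F (S.x k) - S.F xs) := rfl

theorem U_succ (xs : EuclideanSpace ℝ (Fin n)) (k : ℕ) : S.U xs (k + 1) =
    ‖S.x (k + 1) - xs‖ ^ 2 + 2 * S.B (k + 1) * S.α (k + 1) ^ 2 * ‖S.subgradF k‖ ^ 2 +
      2 * S.E (k + 1) * S.α (k + 1) ^ 2 * (S.F (S.x k) - S.F xs) := rfl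

theorem V_succ_le (xs : EuclideanSpace ℝ (Fin n)) (k : ℕ) :
    S.V xs (k + 1) ≤ ‖S.x k - xs‖ ^ 2 + 2 * S.α k ^ 2 * ‖S.subgradF k‖ ^ 2 +
      2 * S.E k * S.α k ^ 2 * (S.F (S.x k) - S.F xs) := by
  rw [V_succ]
  nlinarith [S.norm_sub_sq_succ_le xs k,
    mul_le_mul_of_nonneg_right (S.two_mul_B_succ_mul_sq_le k) (sq_nonneg ‖S.subgradF k‖)]

theorem norm_subgradF_succ_sq_add_le (k : ℕ) :
    ‖S.subgradF (k + 1)‖ ^ 2 + S.E (k + 1) * (S.F (S.x (k + 1)) - S.F (S.x k))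
      ≤ S.B (k + 1) * ‖S.subgradF k‖ ^ 2 := by
  have hα := S.alpha_pos k
  have hlam := S.hlampos k
  rw [B_succ, E_succ]
  split_ifs with h1 h2
  · have := S.alpha_mul_norm_subgradF_succ_sq_le k h1
    rw [zero_mul, one_div_mul_eq_div, ← neg_sub, neg_div, ← sub_eq_add_neg, sub_nonpos,
      le_div_iff₀' hα]
    exact this
  · rw [zero_mul, add_zero, one_mul]
    exact pow_le_pow_left₀ (norm_nonneg _) (S.norm_subgradF_succ_le k (by linarith)) 2
  · rw [zero_mul, add_zero, div_mul_eq_mul_div, le_div_iff₀ (by positivity), mul_comm]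
    exact S.lam_sq_mul_norm_subgradF_succ_sq_le k (by linarith)

theorem V_succ_succ_le_U (xs : EuclideanSpace ℝ (Fin n)) (k : ℕ) :
    S.V xs (k + 2) ≤ S.U xs (k + 1) := by
  rw [U_succ]
  nlinarith [S.V_succ_le xs (k + 1),
    mul_le_mul_of_nonneg_left (S.norm_subgradF_succ_sq_add_le k) (sq_nonneg (S.α (k + 1)))]

variable {S} {xs : EuclideanSpace ℝ (Fin n)}

theorem U_succ_le_V (hxs : ∀ y, S.F xs ≤ S.F y) (k : ℕ) : S.U xs (k + 1) ≤ S.V xs (k + 1) := by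
  rw [U_succ, V_succ]
  nlinarith [mul_le_mul_of_nonneg_right (S.E_succ_mul_sq_le k) (sub_nonneg.mpr (hxs (S.x k)))]

theorem V_succ_le_V_one (hxs : ∀ y, S.F xs ≤ S.F y) (k : ℕ) : S.V xs (k + 1) ≤ S.V xs 1 := by
  induction k with
  | zero => rfl
  | succ k ih => exact (S.V_succ_succ_le_U xs k).trans ((U_succ_le_V hxs k).trans ih)

theorem V_one_le (hxs : ∀ y, S.F xs ≤ S.F y) :
    S.V xs 1 ≤ ‖S.x 0 - xs‖ ^ 2 + 2 * S.α 0 ^ 2 * ‖S.f' (S.x 0) + S.ξ 0‖ ^ 2 +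
      max (2 * (S.E 1 * S.α 1 ^ 2 - S.α 0)) 0 * (S.F (S.x 0) - S.F xs) := by
  have hcoef : 2 * S.E 0 * S.α 0 ^ 2 ≤ max (2 * (S.E 1 * S.α 1 ^ 2 - S.α 0)) 0 := by
    rw [mul_assoc, E_zero_mul_sq]
    exact le_max_left _ _
  have hV := S.V_succ_le xs 0
  rw [subgradF] at hV
  linarith [mul_le_mul_of_nonneg_right hcoef (sub_nonneg.mpr (hxs (S.x 0)))]

theorem norm_sub_sq_le_U (hxs : ∀ y, S.F xs ≤ S.F y) (k : ℕ) :
    ‖S.x (k + 1) - xs‖ ^ 2 ≤ S.U xs (k + 1) := by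
  rw [U_succ]
  have hB := mul_nonneg (mul_nonneg (mul_nonneg zero_le_two (S.B_succ_nonneg k))
    (sq_nonneg (S.α (k + 1)))) (sq_nonneg ‖S.subgradF k‖)
  have hE := mul_nonneg (mul_nonneg (mul_nonneg zero_le_two (S.E_succ_nonneg k))
    (sq_nonneg (S.α (k + 1)))) (sub_nonneg.mpr (hxs (S.x k)))
  linarith

end AdaPBB

/-- Corollary 5.10: the sequence `{x^k}` generated by the AdaPBB iteration is bounded:
`‖x^k - x*‖ ≤ T` for all `k ≥ 0`, where
`T² = ‖x^0 - x*‖² + 2α_0²‖∇f(x^0) + ξ^0‖² + max{2(E_1α_1² - α_0), 0}·(F(x^0) - F_*)`. -/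
theorem adapbb_bounded (n : ℕ) (S : AdaPBB n)
    (xs : EuclideanSpace ℝ (Fin n)) (hxs : ∀ y, S.F xs ≤ S.F y)
    (T : ℝ) (hT0 : 0 ≤ T)
    (hT2 : T ^ 2 = ‖S.x 0 - xs‖ ^ 2 + 2 * S.α 0 ^ 2 * ‖S.f' (S.x 0) + S.ξ 0‖ ^ 2 +
      max (2 * (S.E 1 * S.α 1 ^ 2 - S.α 0)) 0 * (S.F (S.x 0) - S.F xs)) :
    ∀ k, ‖S.x k - xs‖ ≤ T := by
  have hsq : ∀ k, ‖S.x k - xs‖ ^ 2 ≤ T ^ 2 := by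
    rintro (_ | k)
    · rw [hT2, add_assoc]
      refine le_add_of_nonneg_right (add_nonneg (by positivity) ?_)
      exact mul_nonneg (le_max_right _ _) (sub_nonneg.mpr (hxs _))
    · calc ‖S.x (k + 1) - xs‖ ^ 2 ≤ S.U xs (k + 1) := AdaPBB.norm_sub_sq_le_U hxs k
        _ ≤ S.V xs (k + 1) := AdaPBB.U_succ_le_V hxs k
        _ ≤ S.V xs 1 := AdaPBB.V_succ_le_V_one hxs k
        _ ≤ T ^ 2 := hT2 ▸ AdaPBB.V_one_le hxs
  exact fun k => (pow_le_pow_iff_left₀ (norm_nonneg _) hT0 two_ne_zero).mp (hsq k)
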